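/- The equivalence relation u ∼ v ⟺ WC(u) = WC(v) on packed words is compatible with convolution: if u ∼ u' are packed words of length m and v ∼ v' are packed words of length n, then the multisets {WC(w) : w ∈ u ∗ v} and {WC(w) : w ∈ u' ∗ v'} coincide. -/

import Mathlib

/-- Descent set of a composition `I` (list of parts): partial sums except the total. -/
def descSetC (I : List ℕ) : Finset ℕ :=
  ((I.scanl (· + ·) 0).tail.dropLast).toFinset

/-- `I` is a composition of `n`: positive parts summing to `n`. -/
def IsComp (n : ℕ) (I : List ℕ) : Prop :=
  (∀ i ∈ I, 0 < i) ∧ I.sum = n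

/-- The composition of `n` whose descent set is `D ⊆ {1,…,n-1}`. -/
def compOfDescSet (n : ℕ) (D : Finset ℕ) : List ℕ :=
  let s := (D.sort (· ≤ ·)) ++ [n]
  (List.zipWith (fun a b => a - b) s (0 :: s)).filter (fun x => 0 < x)
/-- All words of length `n` over the alphabet `{1,…,n}`. -/
def allWords (n : ℕ) : List (List ℕ) :=
  (List.range n).foldr
    (fun _ acc => (List.range' 1 n).flatMap (fun a => acc.map (a :: ·))) [[]]

def maxL (u : List ℕ) : ℕ := u.foldr max 0

/-- A word is packed if its set of letters is `{1,…,k}` for some `k`. -/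
def IsPacked (u : List ℕ) : Prop := u.toFinset = Finset.Icc 1 (maxL u)

instance : DecidablePred IsPacked := fun u => by unfold IsPacked; infer_instance

/-- Descent set of the W-composition: positions (1-indexed, excluding the last)
of last occurrences of each letter. -/
def WCdesc (u : List ℕ) : Finset ℕ :=
  (((Finset.range u.length).filter
    (fun j => u.getD j 0 ∉ u.drop (j+1))).image (· + 1)).erase u.length

/-- The W-composition of a packed word. -/
def WComp (u : List ℕ) : List ℕ := compOfDescSet u.length (WCdesc u)
/-- The packing of a word: replace letters by `1, 2, …` preserving order. -/
def pack (w : List ℕ) : List ℕ :=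
  w.map (fun x => (w.toFinset.sort (· ≤ ·)).idxOf x + 1)

/-- The convolution `u ∗ v` of two packed words: the packed words `w` whose
first `|u|` letters pack to `u` and remaining letters pack to `v`. -/
def conv (u v : List ℕ) : List (List ℕ) :=
  (allWords (u.length + v.length)).filter
    (fun w => decide (IsPacked w ∧ pack (w.take u.length) = u ∧ pack (w.drop u.length) = v))

/-!
A word `w ∈ u ∗ v` splits as `A ++ B`, where `A` and `B` are `u` and `v` with their letters
replaced increasingly by the alphabets of `A` and `B`. The W-composition of a word is determined
by its length and its set of last-occurrence positions, and those of `A ++ B` are the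
last-occurrence positions of `B` shifted by `|u|`, together with the last-occurrence positions of
`A` whose letter does not occur in `B`. Relabelling does not move last occurrences, and
`WC(u) = WC(u')` says exactly that `u` and `u'` have the same last-occurrence positions. So
`w ↦ A' ++ B'` is a WC-preserving bijection `u ∗ v → u' ∗ v'`, where `A'` is `u'` relabelled by
the alphabet of `A`, and `B'` is `v'` relabelled by the alphabet of `w` minus the letters of `A'`
at those positions where `A` has a last occurrence of a letter missing from `B`.
-/

open Finset

section Compositions

lemma filter_pos_zipWith_sub {s : List ℕ} {b : ℕ} (h : (b :: s).IsChain (· < ·)) :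
    (List.zipWith (fun a c => a - c) s (b :: s)).filter (fun x => 0 < x) =
      List.zipWith (fun a c => a - c) s (b :: s) := by
  induction s generalizing b with
  | nil => rfl
  | cons a s ih =>
    obtain ⟨hba, hc⟩ := List.isChain_cons_cons.1 h
    simp only [List.zipWith_cons_cons, List.filter_cons, decide_eq_true_eq]
    rw [if_pos (by omega), ih hc]

lemma scanl_add_zipWith_sub {s : List ℕ} {b : ℕ} (h : (b :: s).IsChain (· < ·)) :
    List.scanl (· + ·) b (List.zipWith (fun a c => a - c) s (b :: s)) = b :: s := by
  induction s generalizing b with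
  | nil => rfl
  | cons a s ih =>
    obtain ⟨hba, hc⟩ := List.isChain_cons_cons.1 h
    simp only [List.zipWith_cons_cons, List.scanl_cons]
    rw [Nat.add_sub_cancel' hba.le, ih hc]

lemma descSetC_compOfDescSet {n : ℕ} {D : Finset ℕ} (hD : D ⊆ Icc 1 (n - 1)) :
    descSetC (compOfDescSet n D) = D := by
  rcases Nat.eq_zero_or_pos n with rfl | hn
  · obtain rfl : D = ∅ := subset_empty.1 (by simpa using hD)
    simp [descSetC, compOfDescSet]
  have hbounds : ∀ d ∈ D.sort (· ≤ ·), 1 ≤ d ∧ d < n := fun d hd => by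
    have := hD ((mem_sort _).1 hd)
    rw [mem_Icc] at this
    omega
  have hchain : (0 :: (D.sort (· ≤ ·) ++ [n])).IsChain (· < ·) := by
    rw [List.isChain_iff_pairwise, ← List.cons_append, List.pairwise_append, List.pairwise_cons]
    refine ⟨⟨fun d hd => (hbounds d hd).1, (sortedLT_sort D).pairwise⟩, by simp, ?_⟩
    intro d hd x hx
    rw [List.mem_singleton.1 hx]
    rcases List.mem_cons.1 hd with rfl | hd
    · exact hn
    · exact (hbounds d hd).2
  unfold descSetC compOfDescSet
  rw [filter_pos_zipWith_sub hchain, scanl_add_zipWith_sub hchain]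
  simp

end Compositions

section Words

variable {α β : Type*} {L : List α}

lemma mem_foldr_flatMap_cons {r : List β} {w : List α} :
    w ∈ r.foldr (fun _ acc => L.flatMap fun a => acc.map (a :: ·)) [[]] ↔
      w.length = r.length ∧ ∀ x ∈ w, x ∈ L := by
  induction r generalizing w with
  | nil =>
    simp only [List.foldr_nil, List.mem_singleton, List.length_nil, List.length_eq_zero_iff]
    exact ⟨fun h => ⟨h, by simp [h]⟩, And.left⟩
  | cons _ r ih =>
    cases w with
    | nil => simp
    | cons a t => simp [ih, and_assoc, and_left_comm]

lemma nodup_foldr_flatMap_cons (hL : L.Nodup) (r : List β) :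
    (r.foldr (fun _ acc => L.flatMap fun a => acc.map (a :: ·)) [[]]).Nodup := by
  induction r with
  | nil => simp
  | cons _ r ih =>
    refine List.nodup_flatMap.2 ⟨fun a _ => ih.map fun _ _ h => List.cons_injective h, ?_⟩
    refine hL.imp fun hab => List.disjoint_left.2 ?_
    simp only [List.mem_map]
    rintro _ ⟨_, -, rfl⟩ ⟨_, -, h⟩
    exact hab (List.cons_eq_cons.1 h).1.symm

end Words

lemma mem_allWords {n : ℕ} {w : List ℕ} :
    w ∈ allWords n ↔ w.length = n ∧ ∀ x ∈ w, 1 ≤ x ∧ x ≤ n := by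
  simp only [allWords, mem_foldr_flatMap_cons, List.length_range, List.mem_range'_1]
  grind

lemma nodup_conv (u v : List ℕ) : (conv u v).Nodup :=
  (nodup_foldr_flatMap_cons List.nodup_range' _).filter _

lemma isPacked_iff {u : List ℕ} : IsPacked u ↔ u.toFinset = Icc 1 u.toFinset.card := by
  constructor
  · intro h
    conv_rhs => rw [h, Nat.card_Icc, Nat.add_sub_cancel]
    exact h
  · intro h
    have hmax : maxL u = u.toFinset.card := by
      refine le_antisymm (List.max_le_of_forall_le u _ fun x hx => ?_) ?_
      · have := List.mem_toFinset.2 hx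
        rw [h, mem_Icc] at this
        exact this.2
      · rcases Nat.eq_zero_or_pos u.toFinset.card with h0 | h0
        · exact h0.le.trans (Nat.zero_le _)
        · have : u.toFinset.card ∈ Icc 1 u.toFinset.card := mem_Icc.2 ⟨h0, le_rfl⟩
          rw [← h] at this
          exact List.le_max_of_le (List.mem_toFinset.1 this) le_rfl
    rw [IsPacked, hmax]
    exact h

lemma mem_conv {u v w : List ℕ} :
    w ∈ conv u v ↔ w.length = u.length + v.length ∧ IsPacked w ∧
      pack (w.take u.length) = u ∧ pack (w.drop u.length) = v := by
  rw [conv, List.mem_filter, mem_allWords, decide_eq_true_iff]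
  constructor
  · rintro ⟨⟨hl, -⟩, h⟩
    exact ⟨hl, h⟩
  · rintro ⟨hl, hp, h⟩
    refine ⟨⟨hl, fun x hx => ?_⟩, hp, h⟩
    have hx' := List.mem_toFinset.2 hx
    rw [isPacked_iff.1 hp, mem_Icc] at hx'
    have := List.toFinset_card_le w
    omega

section LastOccurrences

variable {u x y : List ℕ} {j : ℕ}

/-- The letter at the `1`-indexed position `j` of `u`. -/
def letterAt (u : List ℕ) (j : ℕ) : ℕ := u.getD (j - 1) 0

def lastPosSet (u : List ℕ) : Finset ℕ :=
  (Icc 1 u.length).filter fun j => letterAt u j ∉ u.drop j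

lemma mem_lastPosSet : j ∈ lastPosSet u ↔ 1 ≤ j ∧ j ≤ u.length ∧ letterAt u j ∉ u.drop j := by
  simp [lastPosSet, and_assoc]

lemma mem_drop_iff_exists_letterAt {a : ℕ} :
    a ∈ u.drop j ↔ ∃ i, j < i ∧ i ≤ u.length ∧ letterAt u i = a := by
  rw [List.mem_iff_getElem]
  constructor
  · rintro ⟨k, hk, rfl⟩
    rw [List.length_drop] at hk
    refine ⟨j + k + 1, by omega, by omega, ?_⟩
    rw [letterAt, List.getElem_drop, Nat.add_sub_cancel, List.getD_eq_getElem]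
  · rintro ⟨i, hji, hi, rfl⟩
    refine ⟨i - 1 - j, by rw [List.length_drop]; omega, ?_⟩
    rw [letterAt, List.getElem_drop, List.getD_eq_getElem _ _ (by omega)]
    congr 1
    omega

lemma letterAt_mem (hj : 1 ≤ j) (hju : j ≤ u.length) : letterAt u j ∈ u :=
  List.mem_of_mem_drop (mem_drop_iff_exists_letterAt.2 ⟨j, Nat.sub_one_lt_of_lt hj, hju, rfl⟩)

lemma letterAt_injOn_lastPosSet (u : List ℕ) : Set.InjOn (letterAt u) (lastPosSet u) := by
  have key : ∀ i ∈ lastPosSet u, ∀ j ∈ lastPosSet u, letterAt u i = letterAt u j → ¬ i < j := by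
    intro i hi j hj h hij
    rw [mem_lastPosSet] at hi hj
    exact hi.2.2 (mem_drop_iff_exists_letterAt.2 ⟨j, hij, hj.2.1, h.symm⟩)
  intro i hi j hj h
  have := key i hi j hj h
  have := key j hj i hi h.symm
  omega

lemma exists_mem_lastPosSet_letterAt_eq {a : ℕ} (ha : a ∈ u) :
    ∃ j ∈ lastPosSet u, letterAt u j = a := by
  set P := (Icc 1 u.length).filter fun j => letterAt u j = a
  obtain ⟨k, hk, hku, rfl⟩ := mem_drop_iff_exists_letterAt.1 ((List.drop_zero (l := u)).symm ▸ ha)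
  have hP : P.Nonempty := ⟨k, by simp [P]; omega⟩
  have hmax := mem_filter.1 (P.max'_mem hP)
  rw [mem_Icc] at hmax
  refine ⟨P.max' hP, mem_lastPosSet.2 ⟨hmax.1.1, hmax.1.2, fun hmem => ?_⟩, hmax.2⟩
  obtain ⟨i, hi, hiu, hia⟩ := mem_drop_iff_exists_letterAt.1 hmem
  have : i ∈ P := mem_filter.2 ⟨mem_Icc.2 ⟨by omega, hiu⟩, hia.trans hmax.2⟩
  exact absurd (P.le_max' i this) (not_le.2 hi)

lemma image_letterAt_lastPosSet (u : List ℕ) : (lastPosSet u).image (letterAt u) = u.toFinset := by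
  ext a
  rw [mem_image, List.mem_toFinset]
  constructor
  · rintro ⟨j, hj, rfl⟩
    rw [mem_lastPosSet] at hj
    exact letterAt_mem hj.1 hj.2.1
  · exact exists_mem_lastPosSet_letterAt_eq

lemma card_lastPosSet (u : List ℕ) : (lastPosSet u).card = u.toFinset.card := by
  rw [← image_letterAt_lastPosSet, card_image_of_injOn (letterAt_injOn_lastPosSet u)]

lemma WCdesc_eq_erase_lastPosSet (u : List ℕ) : WCdesc u = (lastPosSet u).erase u.length := by
  ext j
  simp only [WCdesc, mem_erase, mem_image, mem_filter, mem_range, mem_lastPosSet, letterAt]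
  constructor
  · rintro ⟨hne, i, ⟨hi, hnot⟩, rfl⟩
    exact ⟨hne, by omega, by omega, by simpa using hnot⟩
  · rintro ⟨hne, h1, h2, h3⟩
    exact ⟨hne, j - 1, ⟨by omega, by simpa [Nat.sub_add_cancel h1] using h3⟩, by omega⟩

lemma WComp_congr {w w' : List ℕ} (hl : w.length = w'.length)
    (hL : lastPosSet w = lastPosSet w') : WComp w = WComp w' := by
  rw [WComp, WComp, WCdesc_eq_erase_lastPosSet, WCdesc_eq_erase_lastPosSet, hl, hL]

lemma lastPosSet_eq_of_WComp_eq {u' : List ℕ} (hl : u.length = u'.length)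
    (h : WComp u = WComp u') : lastPosSet u = lastPosSet u' := by
  have hsub : ∀ x : List ℕ, WCdesc x ⊆ Icc 1 (x.length - 1) := fun x j hj => by
    rw [WCdesc_eq_erase_lastPosSet, mem_erase, mem_lastPosSet] at hj
    rw [mem_Icc]
    omega
  have herase := congrArg descSetC h
  rw [WComp, WComp, descSetC_compOfDescSet (hsub u), descSetC_compOfDescSet (hsub u'),
    WCdesc_eq_erase_lastPosSet, WCdesc_eq_erase_lastPosSet, ← hl] at herase
  ext j
  by_cases hj : j = u.length
  · subst hj
    simp [mem_lastPosSet, List.drop_of_length_le, hl]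
  · simpa [hj] using congrArg (j ∈ ·) herase

lemma letterAt_map {f : ℕ → ℕ} (hj : 1 ≤ j) (hju : j ≤ u.length) :
    letterAt (u.map f) j = f (letterAt u j) := by
  rw [letterAt, letterAt, List.getD_eq_getElem _ _ (by simp; omega),
    List.getD_eq_getElem _ _ (by omega), List.getElem_map]

lemma lastPosSet_map {f : ℕ → ℕ} (hf : Set.InjOn f {a | a ∈ u}) :
    lastPosSet (u.map f) = lastPosSet u := by
  ext j
  simp only [mem_lastPosSet, List.length_map]
  refine and_congr_right fun hj => and_congr_right fun hju => not_congr ?_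
  rw [letterAt_map hj hju, ← List.map_drop, List.mem_map]
  constructor
  · rintro ⟨a, ha, hfa⟩
    rwa [← hf (List.mem_of_mem_drop ha) (letterAt_mem hj hju) hfa]
  · exact fun h => ⟨_, h, rfl⟩

lemma letterAt_append_of_le (hj : 1 ≤ j) (hjx : j ≤ x.length) :
    letterAt (x ++ y) j = letterAt x j :=
  List.getD_append _ _ _ _ (by omega)

lemma letterAt_append_of_lt (hjx : x.length < j) :
    letterAt (x ++ y) j = letterAt y (j - x.length) := by
  rw [letterAt, letterAt, List.getD_append_right _ _ _ _ (by omega)]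
  congr 1
  omega

def exclusiveLastPos (x y : List ℕ) : Finset ℕ :=
  (lastPosSet x).filter fun j => letterAt x j ∉ y

lemma lastPosSet_append (x y : List ℕ) :
    lastPosSet (x ++ y) = exclusiveLastPos x y ∪ (lastPosSet y).image (· + x.length) := by
  ext j
  simp only [exclusiveLastPos, mem_union, mem_filter, mem_image, mem_lastPosSet,
    List.length_append]
  rcases le_or_gt j x.length with hjx | hjx
  · have hright : ¬ ∃ i, (1 ≤ i ∧ i ≤ y.length ∧ letterAt y i ∉ y.drop i) ∧ i + x.length = j :=
      fun ⟨i, hi, hij⟩ => by omega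
    simp only [hright, or_false]
    by_cases hj : 1 ≤ j
    · rw [letterAt_append_of_le hj hjx, List.drop_append_of_le_length hjx, List.mem_append]
      have : j ≤ x.length + y.length := by omega
      tauto
    · tauto
  · have hdrop : (x ++ y).drop j = y.drop (j - x.length) := by
      have := List.drop_length_add_append (l₁ := x) (l₂ := y) (j - x.length)
      rwa [Nat.add_sub_cancel' hjx.le] at this
    rw [letterAt_append_of_lt hjx, hdrop]
    constructor
    · rintro ⟨-, hjl, hnot⟩
      exact Or.inr ⟨j - x.length, ⟨by omega, by omega, hnot⟩, by omega⟩
    · rintro (⟨⟨-, hj, -⟩, -⟩ | ⟨i, ⟨hi, hiy, hnot⟩, rfl⟩)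
      · omega
      · rw [Nat.add_sub_cancel]
        exact ⟨by omega, by omega, hnot⟩

lemma image_letterAt_exclusiveLastPos (x y : List ℕ) :
    (exclusiveLastPos x y).image (letterAt x) = x.toFinset \ y.toFinset := by
  rw [exclusiveLastPos, ← filter_image (p := (· ∉ y)), image_letterAt_lastPosSet, sdiff_eq_filter]
  simp only [List.mem_toFinset]

end LastOccurrences

lemma List.toFinset_map {α β : Type*} [DecidableEq α] [DecidableEq β] (f : α → β) (l : List α) :
    (l.map f).toFinset = l.toFinset.image f :=
  Multiset.toFinset_map f l

section Relabel

variable {s : Finset ℕ} {u : List ℕ}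

/-- The `a`-th smallest element of `s`, counting from `a = 1`. -/
def nthSmallest (s : Finset ℕ) (a : ℕ) : ℕ := (s.sort (· ≤ ·)).getD (a - 1) 0

def relabel (s : Finset ℕ) (u : List ℕ) : List ℕ := u.map (nthSmallest s)

lemma nthSmallest_injOn (s : Finset ℕ) : Set.InjOn (nthSmallest s) (Icc 1 s.card) := by
  intro a ha b hb h
  simp only [coe_Icc, Set.mem_Icc] at ha hb
  rw [nthSmallest, nthSmallest, List.getD_eq_getElem _ _ (by simp; omega),
    List.getD_eq_getElem _ _ (by simp; omega)] at h
  have := (sort_nodup s (· ≤ ·)).getElem_inj_iff.1 h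
  omega

lemma image_nthSmallest (s : Finset ℕ) : (Icc 1 s.card).image (nthSmallest s) = s := by
  ext x
  rw [mem_image, ← mem_sort (· ≤ ·), List.mem_iff_getElem]
  constructor
  · rintro ⟨a, ha, rfl⟩
    rw [mem_Icc] at ha
    exact ⟨a - 1, by simp; omega, (List.getD_eq_getElem _ _ _).symm⟩
  · rintro ⟨i, hi, rfl⟩
    rw [length_sort] at hi
    exact ⟨i + 1, mem_Icc.2 ⟨by omega, hi⟩, by rw [nthSmallest, Nat.add_sub_cancel,
      List.getD_eq_getElem]⟩

lemma toFinset_relabel (hu : u.toFinset = Icc 1 s.card) : (relabel s u).toFinset = s := by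
  rw [relabel, List.toFinset_map, hu, image_nthSmallest]

lemma lastPosSet_relabel (hu : u.toFinset ⊆ Icc 1 s.card) :
    lastPosSet (relabel s u) = lastPosSet u :=
  lastPosSet_map ((nthSmallest_injOn s).mono fun _ ha => hu (List.mem_toFinset.2 ha))

lemma pack_relabel (hu : u.toFinset = Icc 1 s.card) : pack (relabel s u) = u := by
  rw [pack, toFinset_relabel hu, relabel, List.map_map]
  refine (List.map_congr_left fun a ha => ?_).trans (List.map_id u)
  have ha' := List.mem_toFinset.2 ha
  rw [hu, mem_Icc] at ha'
  have hlt : a - 1 < (s.sort (· ≤ ·)).length := by rw [length_sort]; omega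
  simp only [Function.comp, nthSmallest, List.getD_eq_getElem _ _ hlt, id,
    (sort_nodup s (· ≤ ·)).idxOf_getElem _ hlt]
  omega

lemma relabel_toFinset_pack (x : List ℕ) : relabel x.toFinset (pack x) = x := by
  rw [relabel, pack, List.map_map]
  refine (List.map_congr_left fun y hy => ?_).trans (List.map_id x)
  have hy' : y ∈ x.toFinset.sort (· ≤ ·) := (mem_sort _).2 (List.mem_toFinset.2 hy)
  have hlt := List.idxOf_lt_length_iff.2 hy'
  simp only [Function.comp, nthSmallest, Nat.add_sub_cancel, List.getD_eq_getElem _ _ hlt,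
    List.getElem_idxOf, id]

lemma eq_relabel_of_pack_eq {x : List ℕ} (h : pack x = u) : x = relabel x.toFinset u :=
  h ▸ (relabel_toFinset_pack x).symm

lemma card_toFinset_pack (x : List ℕ) : (pack x).toFinset.card = x.toFinset.card := by
  refine le_antisymm ?_ ?_
  · rw [pack, List.toFinset_map]
    exact card_image_le
  · conv_lhs => rw [← relabel_toFinset_pack x, relabel, List.toFinset_map]
    exact card_image_le

end Relabel

section Exchange

variable {A A' B B' : List ℕ}

/-- The alphabet given to the right factor when the left factor `A` of `A ++ B` is replaced
by `A'`. -/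
def exchangeAlphabet (A A' B : List ℕ) : Finset ℕ :=
  (A.toFinset ∪ B.toFinset) \ (exclusiveLastPos A B).image (letterAt A')

lemma image_letterAt_exclusiveLastPos_subset (hL : lastPosSet A' = lastPosSet A) :
    (exclusiveLastPos A B).image (letterAt A') ⊆ A'.toFinset := by
  rw [← image_letterAt_lastPosSet A', hL]
  exact image_subset_image (filter_subset _ _)

lemma card_exchangeAlphabet (hS : A'.toFinset = A.toFinset)
    (hL : lastPosSet A' = lastPosSet A) :
    (exchangeAlphabet A A' B).card = B.toFinset.card := by
  have hsub := image_letterAt_exclusiveLastPos_subset (B := B) hL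
  rw [hS] at hsub
  have hX : (exclusiveLastPos A B).card = (A.toFinset \ B.toFinset).card := by
    rw [← image_letterAt_exclusiveLastPos]
    exact (card_image_of_injOn ((letterAt_injOn_lastPosSet A).mono (filter_subset _ _))).symm
  have hY : ((exclusiveLastPos A B).image (letterAt A')).card = (exclusiveLastPos A B).card :=
    card_image_of_injOn ((letterAt_injOn_lastPosSet A').mono (hL ▸ filter_subset _ _))
  rw [exchangeAlphabet, card_sdiff_of_subset (hsub.trans subset_union_left), hY, hX,
    ← card_sdiff_add_card]
  omega

lemma union_exchangeAlphabet (hS : A'.toFinset = A.toFinset)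
    (hL : lastPosSet A' = lastPosSet A) :
    A'.toFinset ∪ exchangeAlphabet A A' B = A.toFinset ∪ B.toFinset := by
  have hsub := image_letterAt_exclusiveLastPos_subset (B := B) hL
  rw [hS] at hsub ⊢
  ext a
  have := @hsub a
  simp only [exchangeAlphabet, mem_union, mem_sdiff] at this ⊢
  tauto

lemma exclusiveLastPos_of_toFinset_eq_exchangeAlphabet (hS : A'.toFinset = A.toFinset)
    (hL : lastPosSet A' = lastPosSet A) (hB' : B'.toFinset = exchangeAlphabet A A' B) :
    exclusiveLastPos A' B' = exclusiveLastPos A B := by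
  ext j
  have hXL : exclusiveLastPos A B ⊆ lastPosSet A' := hL ▸ filter_subset _ _
  rw [exclusiveLastPos, mem_filter, ← List.mem_toFinset, hB', exchangeAlphabet, mem_sdiff,
    not_and_not_right, mem_image]
  constructor
  · rintro ⟨hj, hmem⟩
    have hA' : letterAt A' j ∈ A'.toFinset := image_letterAt_lastPosSet A' ▸ mem_image_of_mem _ hj
    obtain ⟨i, hi, hij⟩ := hmem (mem_union_left _ (hS ▸ hA'))
    rwa [← letterAt_injOn_lastPosSet A' (hXL hi) hj hij]
  · intro hj
    exact ⟨hXL hj, fun _ => ⟨j, hj, rfl⟩⟩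

lemma exchangeAlphabet_of_toFinset_eq_exchangeAlphabet (hS : A'.toFinset = A.toFinset)
    (hL : lastPosSet A' = lastPosSet A) (hB' : B'.toFinset = exchangeAlphabet A A' B) :
    exchangeAlphabet A' A B' = B.toFinset := by
  rw [exchangeAlphabet, hB', union_exchangeAlphabet hS hL,
    exclusiveLastPos_of_toFinset_eq_exchangeAlphabet hS hL hB', image_letterAt_exclusiveLastPos]
  ext a
  simp only [mem_union, mem_sdiff]
  tauto

end Exchange

/-- The word of `u' ∗ v'` matched with `w ∈ u ∗ v`, where `m = |u|`. -/
def transfer (m : ℕ) (u' v' w : List ℕ) : List ℕ :=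
  let A' := relabel (w.take m).toFinset u'
  A' ++ relabel (exchangeAlphabet (w.take m) A' (w.drop m)) v'

lemma toFinset_eq_Icc_of_pack_eq {x u u' : List ℕ} (hu' : IsPacked u')
    (hL : lastPosSet u = lastPosSet u') (h : pack x = u) : u'.toFinset = Icc 1 x.toFinset.card := by
  rw [← card_toFinset_pack, h, ← card_lastPosSet, hL, card_lastPosSet]
  exact isPacked_iff.1 hu'

theorem transfer_spec {u u' v v' w : List ℕ}
    (hu : IsPacked u) (hu' : IsPacked u') (hv : IsPacked v) (hv' : IsPacked v')
    (hlu : u.length = u'.length) (hLu : lastPosSet u = lastPosSet u')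
    (hLv : lastPosSet v = lastPosSet v')
    (hw : w ∈ conv u v) :
    transfer u.length u' v' w ∈ conv u' v' ∧
      lastPosSet (transfer u.length u' v' w) = lastPosSet w ∧
      transfer u'.length u v (transfer u.length u' v' w) = w := by
  obtain ⟨hwl, hwp, hA, hB⟩ := mem_conv.1 hw
  set A := w.take u.length
  set B := w.drop u.length
  have hAB : A ++ B = w := List.take_append_drop _ _
  have hAlen : A.length = u.length := by simp [A, hwl]
  have hAu := eq_relabel_of_pack_eq hA
  have hBv := eq_relabel_of_pack_eq hB
  have huA := toFinset_eq_Icc_of_pack_eq hu rfl hA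
  have hvB := toFinset_eq_Icc_of_pack_eq hv rfl hB
  have hu'A := toFinset_eq_Icc_of_pack_eq hu' hLu hA
  set A' := relabel A.toFinset u'
  have hSA' : A'.toFinset = A.toFinset := toFinset_relabel hu'A
  have hLA' : lastPosSet A' = lastPosSet A := by
    rw [lastPosSet_relabel hu'A.subset, ← hLu, hAu, lastPosSet_relabel huA.subset]
  have hv'R : v'.toFinset = Icc 1 (exchangeAlphabet A A' B).card := by
    rw [card_exchangeAlphabet hSA' hLA']
    exact toFinset_eq_Icc_of_pack_eq hv' hLv hB
  set B' := relabel (exchangeAlphabet A A' B) v'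
  have hSB' : B'.toFinset = exchangeAlphabet A A' B := toFinset_relabel hv'R
  have hA'len : A'.length = u'.length := List.length_map _
  have htransfer : transfer u.length u' v' w = A' ++ B' := rfl
  rw [htransfer]
  refine ⟨?_, ?_, ?_⟩
  · rw [mem_conv, List.take_left' hA'len, List.drop_left' hA'len, isPacked_iff,
      List.toFinset_append, hSB', union_exchangeAlphabet hSA' hLA', ← List.toFinset_append, hAB]
    refine ⟨?_, isPacked_iff.1 hwp, pack_relabel hu'A, pack_relabel hv'R⟩
    simp only [List.length_append, List.length_map, A', B', relabel]
  · rw [← hAB, lastPosSet_append, lastPosSet_append,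
      exclusiveLastPos_of_toFinset_eq_exchangeAlphabet hSA' hLA' hSB', hA'len, hAlen, hlu,
      lastPosSet_relabel hv'R.subset, ← hLv, hBv, lastPosSet_relabel hvB.subset]
  · simp only [transfer, List.take_left' hA'len, List.drop_left' hA'len, hSA']
    rw [← hAu, exchangeAlphabet_of_toFinset_eq_exchangeAlphabet hSA' hLA' hSB', ← hBv, hAB]

/-- The equivalence `u ∼ v ⟺ WC(u) = WC(v)` on packed words is compatible
with convolution: the multiset of W-compositions of `u ∗ v` depends only on
`WC(u)` and `WC(v)`. -/
theorem stmt14 (u u' v v' : List ℕ)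
    (hu : IsPacked u) (hu' : IsPacked u') (hv : IsPacked v) (hv' : IsPacked v')
    (hlu : u.length = u'.length) (hlv : v.length = v'.length)
    (h1 : WComp u = WComp u') (h2 : WComp v = WComp v') :
    (↑((conv u v).map WComp) : Multiset (List ℕ)) = ↑((conv u' v').map WComp) := by
  have hLu := lastPosSet_eq_of_WComp_eq hlu h1
  have hLv := lastPosSet_eq_of_WComp_eq hlv h2
  have fwd := fun w (hw : w ∈ conv u v) => transfer_spec hu hu' hv hv' hlu hLu hLv hw
  have bwd := fun w (hw : w ∈ conv u' v') =>
    transfer_spec hu' hu hv' hv hlu.symm hLu.symm hLv.symm hw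
  rw [← Multiset.map_coe, ← Multiset.map_coe]
  refine Multiset.map_eq_map_of_bij_of_nodup _ _ (nodup_conv u v) (nodup_conv u' v')
    (fun w _ => transfer u.length u' v' w) (fun w hw => (fwd w hw).1) ?_ ?_ ?_
  · intro w₁ hw₁ w₂ hw₂ h
    rw [← (fwd w₁ hw₁).2.2, ← (fwd w₂ hw₂).2.2, h]
  · intro w' hw'
    exact ⟨_, (bwd w' hw').1, hlu ▸ (bwd w' hw').2.2⟩
  · intro w hw
    refine WComp_congr ?_ (fwd w hw).2.1.symm
    rw [(mem_conv.1 hw).1, (mem_conv.1 (fwd w hw).1).1, hlu, hlv]
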